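/- Let π_n be a directed path with n edges and λ_{n+1} a directed cycle with n+1 edges, both rigid directed multigraphs without self-loops. Then a monic span (overlap) (π_n ↩ M ↪ λ_{n+1}) has a pushout that is again a rigid graph without self-loops if and only if M is the empty graph, or the map π_n ↩ M is an isomorphism (i.e., the path fully embeds into the cycle). Consequently there are exactly n + 2 such admissible overlaps up to isomorphism of spans. -/

import Mathlib

open CategoryTheory

/-- A directed multigraph: vertex set, edge set, source and target maps. -/
structure MultiGraph where
  V : Type
  E : Type
  s : E → V
  t : E → V

/-- A homomorphism of directed multigraphs. -/
@[ext]
structure MultiGraphHom (G H : MultiGraph) where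
  onV : G.V → H.V
  onE : G.E → H.E
  src : ∀ e, H.s (onE e) = onV (G.s e)
  tgt : ∀ e, H.t (onE e) = onV (G.t e)

/-- The category of directed multigraphs. -/
instance : Category MultiGraph where
  Hom := MultiGraphHom
  id G := ⟨id, id, fun _ => rfl, fun _ => rfl⟩
  comp f g := ⟨g.onV ∘ f.onV, g.onE ∘ f.onE,
    fun e => by simp [g.src, f.src], fun e => by simp [g.tgt, f.tgt]⟩
  id_comp f := rfl
  comp_id f := rfl
  assoc f g h := rfl

@[simp] lemma MultiGraph.comp_onV {G H K : MultiGraph} (f : G ⟶ H) (g : H ⟶ K) :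
    (f ≫ g).onV = g.onV ∘ f.onV := rfl

@[simp] lemma MultiGraph.comp_onE {G H K : MultiGraph} (f : G ⟶ H) (g : H ⟶ K) :
    (f ≫ g).onE = g.onE ∘ f.onE := rfl

/-- The directed path with `n` edges (`n+1` vertices). -/
def pathGraph (n : ℕ) : MultiGraph :=
  ⟨Fin (n + 1), Fin n, fun e => e.castSucc, fun e => e.succ⟩

/-- The directed cycle with `n` vertices and `n` edges. -/
def cycleGraph (n : ℕ) : MultiGraph :=
  ⟨Fin n, Fin n, id, fun e => ⟨(e.val + 1) % n, Nat.mod_lt _ e.pos⟩⟩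

/-- A rigid directed multigraph without self-loops: no self-loops, and every
vertex has out-degree ≤ 1 and in-degree ≤ 1 (injective source and target
maps). -/
def IsRigid (G : MultiGraph) : Prop :=
  (∀ e, G.s e ≠ G.t e) ∧ Function.Injective G.s ∧ Function.Injective G.t

/-- An admissible overlap of the path `π_n` and the cycle `λ_{n+1}`: a monic
span `(π_n ↩ M ↪ λ_{n+1})` whose pushout is again a rigid graph without
self-loops. -/
structure AdmissibleOverlap (n : ℕ) where
  M : MultiGraph
  f : M ⟶ pathGraph n
  g : M ⟶ cycleGraph (n + 1)
  mono_f : Mono f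
  mono_g : Mono g
  admissible : ∃ (P : MultiGraph) (iP : pathGraph n ⟶ P)
    (iC : cycleGraph (n + 1) ⟶ P), IsPushout f g iP iC ∧ IsRigid P

/-- Isomorphism of overlaps: an isomorphism of the middle objects commuting
with the two legs of the spans. -/
def overlapIso (n : ℕ) (O O' : AdmissibleOverlap n) : Prop :=
  ∃ φ : O.M ≅ O'.M, φ.hom ≫ O'.f = O.f ∧ φ.hom ≫ O'.g = O.g

/-!
Monomorphisms of multigraphs are the maps injective on vertices and on edges, and in a pushout of
a span whose legs are injective on edges, an edge of one side is identified with an edge of the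
other only if both come from the overlap `M`. Every vertex of the cycle has an in-edge and an
out-edge. So if a vertex `v` of the path lies in the overlap, then a path edge at `v` that is not in
the overlap gives the pushout a vertex with two out-edges or two in-edges. Hence, when the pushout
is rigid, the overlap is closed under adjacency in the path: it is empty or the whole path.
Conversely, the disjoint union and the cycle itself are rigid. A full overlap is determined by an
embedding of the path into the cycle. Such an embedding is the rotation fixed by the image of vertex
`0`, so there are `n + 1` of them; with the empty overlap this gives `n + 2` classes.
-/

open CategoryTheory Limits Function Set

theorem Fin.mem_iff_mem_of_castSucc_mem_iff {n : ℕ} {S : Set (Fin (n + 1))}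
    (hS : ∀ i : Fin n, i.castSucc ∈ S ↔ i.succ ∈ S) (v w : Fin (n + 1)) : v ∈ S ↔ w ∈ S := by
  suffices h : ∀ v, v ∈ S ↔ 0 ∈ S from (h v).trans (h w).symm
  exact Fin.induction Iff.rfl fun i ih => (hS i).symm.trans ih

theorem Fin.castSucc_add_add_one {n : ℕ} (e : Fin n) (k : Fin (n + 1)) :
    e.castSucc + k + 1 = e.succ + k := by
  rw [add_right_comm, Fin.coeSucc_eq_succ]

namespace MultiGraph

@[ext]
lemma hom_ext {G H : MultiGraph} {f f' : G ⟶ H} (hV : f.onV = f'.onV) (hE : f.onE = f'.onE) :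
    f = f' :=
  MultiGraphHom.ext hV hE

def vertex : MultiGraph := ⟨PUnit, Empty, Empty.elim, Empty.elim⟩

def edge : MultiGraph := ⟨Bool, PUnit, fun _ => false, fun _ => true⟩

def bouquet (X : Type) : MultiGraph := ⟨PUnit, X, fun _ => .unit, fun _ => .unit⟩

def empty : MultiGraph := ⟨Empty, Empty, Empty.elim, Empty.elim⟩

instance : IsEmpty empty.V := inferInstanceAs (IsEmpty Empty)

def sum (A B : MultiGraph) : MultiGraph :=
  ⟨A.V ⊕ B.V, A.E ⊕ B.E, Sum.map A.s B.s, Sum.map A.t B.t⟩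

def vertexHom {G : MultiGraph} (v : G.V) : vertex ⟶ G :=
  ⟨fun _ => v, Empty.elim, fun e => e.elim, fun e => e.elim⟩

def edgeHom {G : MultiGraph} (e : G.E) : edge ⟶ G :=
  ⟨fun b => cond b (G.t e) (G.s e), fun _ => e, fun _ => rfl, fun _ => rfl⟩

def toBouquet (G : MultiGraph) {X : Type} (φ : G.E → X) : G ⟶ bouquet X :=
  ⟨fun _ => .unit, φ, fun _ => rfl, fun _ => rfl⟩

def sumInl (A B : MultiGraph) : A ⟶ sum A B := ⟨Sum.inl, Sum.inl, fun _ => rfl, fun _ => rfl⟩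

def sumInr (A B : MultiGraph) : B ⟶ sum A B := ⟨Sum.inr, Sum.inr, fun _ => rfl, fun _ => rfl⟩

theorem mono_iff_injective {G H : MultiGraph} (f : G ⟶ H) :
    Mono f ↔ Injective f.onV ∧ Injective f.onE := by
  refine ⟨fun _ => ⟨fun v w h => ?_, fun a b h => ?_⟩, fun ⟨hV, hE⟩ => ⟨fun a b h => ?_⟩⟩
  · have : vertexHom v ≫ f = vertexHom w ≫ f := hom_ext (funext fun _ => h) (funext nofun)
    exact congrArg (·.onV .unit) ((cancel_mono f).1 this)
  · have : edgeHom a ≫ f = edgeHom b ≫ f := by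
      refine hom_ext (funext fun x => ?_) (funext fun _ => h)
      cases x
      · exact (f.src a).symm.trans (h ▸ f.src b)
      · exact (f.tgt a).symm.trans (h ▸ f.tgt b)
    exact congrArg (·.onE .unit) ((cancel_mono f).1 this)
  · exact hom_ext (funext fun x => hV (congrFun (congrArg (·.onV) h) x))
      (funext fun x => hE (congrFun (congrArg (·.onE) h) x))

theorem isIso_of_bijective {G H : MultiGraph} (f : G ⟶ H) (hV : Bijective f.onV)
    (hE : Bijective f.onE) : IsIso f := by
  let eV := Equiv.ofBijective _ hV
  let eE := Equiv.ofBijective _ hE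
  refine ⟨⟨⟨eV.symm, eE.symm, fun e => hV.1 ?_, fun e => hV.1 ?_⟩, ?_, ?_⟩⟩
  · rw [← f.src]
    exact (congrArg H.s (eE.apply_symm_apply e)).trans (eV.apply_symm_apply _).symm
  · rw [← f.tgt]
    exact (congrArg H.t (eE.apply_symm_apply e)).trans (eV.apply_symm_apply _).symm
  · ext x
    exacts [eV.symm_apply_apply x, eE.symm_apply_apply x]
  · ext x
    exacts [eV.apply_symm_apply x, eE.apply_symm_apply x]

def isInitialOfIsEmpty (G : MultiGraph) [IsEmpty G.V] : IsInitial G :=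
  IsInitial.ofUniqueHom
    (fun _ => ⟨isEmptyElim, fun e => isEmptyElim (G.s e), fun e => isEmptyElim (G.s e),
      fun e => isEmptyElim (G.s e)⟩)
    (fun _ _ => hom_ext (funext isEmptyElim) (funext fun e => isEmptyElim (G.s e)))

def isColimitSum (A B : MultiGraph) : IsColimit (BinaryCofan.mk (sumInl A B) (sumInr A B)) :=
  BinaryCofan.IsColimit.mk _
    (fun a b => ⟨Sum.elim a.onV b.onV, Sum.elim a.onE b.onE,
      by rintro (e | e); exacts [a.src e, b.src e], by rintro (e | e); exacts [a.tgt e, b.tgt e]⟩)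
    (fun _ _ => rfl) (fun _ _ => rfl)
    (fun _ _ m ha hb => by
      subst ha hb
      ext (x | x) <;> rfl)

theorem isPushout_sum {M A B : MultiGraph} (hM : IsInitial M) (f : M ⟶ A) (g : M ⟶ B) :
    IsPushout f g (sumInl A B) (sumInr A B) := by
  rw [hM.hom_ext f (hM.to A), hM.hom_ext g (hM.to B)]
  exact IsPushout.of_is_coproduct' (isColimitSum A B) hM

theorem isRigid_sum {A B : MultiGraph} (hA : IsRigid A) (hB : IsRigid B) : IsRigid (sum A B) := by
  refine ⟨?_, hA.2.1.sumMap hB.2.1, hA.2.2.sumMap hB.2.2⟩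
  rintro (e | e) h
  exacts [hA.1 e (Sum.inl.inj h), hB.1 e (Sum.inr.inj h)]

section Pushout

variable {M A B P : MultiGraph} {f : M ⟶ A} {g : M ⟶ B} {iA : A ⟶ P} {iB : B ⟶ P}

/-- The edge labellings `φA`, `φB` below agree on `M` because `g` is injective, so they descend to
the pushout, where `h` forces `φB b = φA a`, which holds. -/
theorem exists_onE_eq_of_isPushout (hpo : IsPushout f g iA iB) (hg : Injective g.onE)
    {a : A.E} {b : B.E} (h : iA.onE a = iB.onE b) : ∃ m, f.onE m = a ∧ g.onE m = b := by
  let φA : A.E → Prop := (· = a)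
  let φB : B.E → Prop := fun b => ∃ m, f.onE m = a ∧ g.onE m = b
  have w : f ≫ toBouquet A φA = g ≫ toBouquet B φB := by
    refine hom_ext rfl (funext fun m => propext ⟨fun hm => ⟨m, hm, rfl⟩, ?_⟩)
    rintro ⟨m', hm', hgm⟩
    show f.onE m = a
    rwa [← hg hgm]
  have hA := congrArg (·.onE a) (hpo.inl_desc _ _ w)
  have hB := congrArg (·.onE b) (hpo.inr_desc _ _ w)
  have key : φA a = φB b := hA.symm.trans ((congrArg (hpo.desc _ _ w).onE h).trans hB)
  exact cast key rfl

theorem mem_range_onE_of_src_mem (hpo : IsPushout f g iA iB) (hg : Injective g.onE)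
    (hBs : Surjective B.s) (hPs : Injective P.s) {a : A.E} (ha : A.s a ∈ range f.onV) :
    a ∈ range f.onE := by
  obtain ⟨m, hm⟩ := ha
  obtain ⟨c, hc⟩ := hBs (g.onV m)
  have hsq : iA.onV (f.onV m) = iB.onV (g.onV m) := congrArg (·.onV m) hpo.w
  obtain ⟨m', hm', -⟩ := exists_onE_eq_of_isPushout hpo hg (b := c)
    (hPs (by rw [iA.src, iB.src, ← hm, hc, hsq]))
  exact ⟨m', hm'⟩

theorem mem_range_onE_of_tgt_mem (hpo : IsPushout f g iA iB) (hg : Injective g.onE)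
    (hBt : Surjective B.t) (hPt : Injective P.t) {a : A.E} (ha : A.t a ∈ range f.onV) :
    a ∈ range f.onE := by
  obtain ⟨m, hm⟩ := ha
  obtain ⟨c, hc⟩ := hBt (g.onV m)
  have hsq : iA.onV (f.onV m) = iB.onV (g.onV m) := congrArg (·.onV m) hpo.w
  obtain ⟨m', hm', -⟩ := exists_onE_eq_of_isPushout hpo hg (b := c)
    (hPt (by rw [iA.tgt, iB.tgt, ← hm, hc, hsq]))
  exact ⟨m', hm'⟩

end Pushout

theorem isRigid_pathGraph (n : ℕ) : IsRigid (pathGraph n) :=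
  ⟨fun _ => Fin.castSucc_lt_succ.ne, Fin.castSucc_injective n, Fin.succ_injective n⟩

theorem cycleGraph_t (n : ℕ) (e : Fin (n + 1)) :
    (cycleGraph (n + 1)).t e = (e + 1 : Fin (n + 1)) :=
  Fin.ext (by simp [cycleGraph, Fin.val_add])

theorem surjective_cycleGraph_s (n : ℕ) : Surjective (cycleGraph n).s := surjective_id

theorem surjective_cycleGraph_t (n : ℕ) : Surjective (cycleGraph (n + 1)).t := by
  rw [funext (cycleGraph_t n)]
  exact add_right_surjective (G := Fin (n + 1)) 1

theorem isRigid_cycleGraph {n : ℕ} (hn : 1 ≤ n) : IsRigid (cycleGraph (n + 1)) := by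
  refine ⟨fun (e : Fin (n + 1)) h => ?_, injective_id, ?_⟩
  · have h' : e = e + 1 := h.trans (cycleGraph_t n e)
    rw [left_eq_add, Fin.one_eq_zero_iff] at h'
    omega
  · rw [funext (cycleGraph_t n)]
    exact add_left_injective (G := Fin (n + 1)) 1

theorem isIso_of_isPushout_pathGraph {n : ℕ} {M B P : MultiGraph} {f : M ⟶ pathGraph n}
    {g : M ⟶ B} {iA : pathGraph n ⟶ P} {iB : B ⟶ P} (hpo : IsPushout f g iA iB) [Mono f] [Mono g]
    (hBs : Surjective B.s) (hBt : Surjective B.t) (hPs : Injective P.s) (hPt : Injective P.t)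
    [Nonempty M.V] : IsIso f := by
  obtain ⟨hfV, hfE⟩ := (mono_iff_injective f).1 ‹_›
  have hgE := ((mono_iff_injective g).1 ‹_›).2
  have hsrc (i : Fin n) : i.castSucc ∈ range f.onV ↔ i ∈ range f.onE :=
    ⟨mem_range_onE_of_src_mem hpo hgE hBs hPs, fun ⟨m, hm⟩ => ⟨M.s m, by rw [← f.src, hm]; rfl⟩⟩
  have htgt (i : Fin n) : i.succ ∈ range f.onV ↔ i ∈ range f.onE :=
    ⟨mem_range_onE_of_tgt_mem hpo hgE hBt hPt, fun ⟨m, hm⟩ => ⟨M.t m, by rw [← f.tgt, hm]; rfl⟩⟩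
  obtain ⟨m⟩ := ‹Nonempty M.V›
  have hV : Surjective f.onV := fun v =>
    (Fin.mem_iff_mem_of_castSucc_mem_iff (fun i => (hsrc i).trans (htgt i).symm) v
      (f.onV m)).2 ⟨m, rfl⟩
  exact isIso_of_bijective f ⟨hfV, hV⟩ ⟨hfE, fun i => (hsrc i).1 (hV _)⟩

def rotation (n : ℕ) (k : Fin (n + 1)) : pathGraph n ⟶ cycleGraph (n + 1) where
  onV := fun v : Fin (n + 1) => v + k
  onE := fun e : Fin n => e.castSucc + k
  src _ := rfl
  tgt e := (cycleGraph_t n _).trans (Fin.castSucc_add_add_one e k)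

theorem mono_rotation (n : ℕ) (k : Fin (n + 1)) : Mono (rotation n k) :=
  (mono_iff_injective _).2
    ⟨add_left_injective (G := Fin (n + 1)) k,
      (add_left_injective (G := Fin (n + 1)) k).comp (Fin.castSucc_injective n)⟩

theorem eq_rotation {n : ℕ} (h : pathGraph n ⟶ cycleGraph (n + 1)) :
    h = rotation n (h.onV (0 : Fin (n + 1))) := by
  set k : Fin (n + 1) := h.onV (0 : Fin (n + 1))
  have hV : ∀ v : Fin (n + 1), h.onV v = v + k :=
    Fin.induction (zero_add k).symm fun i ih =>
      (h.tgt i).symm.trans ((congrArg (cycleGraph (n + 1)).t ((h.src i).trans ih)).trans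
        ((cycleGraph_t n _).trans (Fin.castSucc_add_add_one i k)))
  exact hom_ext (funext hV) (funext fun e => (h.src e).trans (hV _))

theorem mono_of_pathGraph_to_cycleGraph {n : ℕ} (h : pathGraph n ⟶ cycleGraph (n + 1)) :
    Mono h := by
  rw [eq_rotation h]
  exact mono_rotation n _

def pathToCycleEquiv (n : ℕ) : (pathGraph n ⟶ cycleGraph (n + 1)) ≃ Fin (n + 1) where
  toFun h := h.onV (0 : Fin (n + 1))
  invFun := rotation n
  left_inv h := (eq_rotation h).symm
  right_inv := zero_add

theorem isEmpty_or_isIso_of_isPushout {n : ℕ} {M P : MultiGraph} {f : M ⟶ pathGraph n}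
    {g : M ⟶ cycleGraph (n + 1)} [Mono f] [Mono g] {iP : pathGraph n ⟶ P}
    {iC : cycleGraph (n + 1) ⟶ P} (hpo : IsPushout f g iP iC) (hP : IsRigid P) :
    (IsEmpty M.V ∧ IsEmpty M.E) ∨ IsIso f := by
  rcases isEmpty_or_nonempty M.V with hM | hM
  · exact Or.inl ⟨hM, ⟨fun e => isEmptyElim (M.s e)⟩⟩
  · exact Or.inr (isIso_of_isPushout_pathGraph hpo (surjective_cycleGraph_s _)
      (surjective_cycleGraph_t n) hP.2.1 hP.2.2)

theorem exists_isPushout_isRigid {n : ℕ} (hn : 1 ≤ n) {M : MultiGraph} (f : M ⟶ pathGraph n)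
    (g : M ⟶ cycleGraph (n + 1)) (h : IsEmpty M.V ∨ IsIso f) :
    ∃ (P : MultiGraph) (iP : pathGraph n ⟶ P) (iC : cycleGraph (n + 1) ⟶ P),
      IsPushout f g iP iC ∧ IsRigid P := by
  rcases h with hM | hf
  · exact ⟨_, _, _, isPushout_sum (isInitialOfIsEmpty M) f g,
      isRigid_sum (isRigid_pathGraph n) (isRigid_cycleGraph hn)⟩
  · exact ⟨_, inv f ≫ g, 𝟙 _, IsPushout.of_horiz_isIso ⟨by simp⟩, isRigid_cycleGraph hn⟩

theorem not_isIso_of_isEmpty {n : ℕ} {M : MultiGraph} (hM : IsEmpty M.V)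
    (f : M ⟶ pathGraph n) : ¬IsIso f :=
  fun _ => isEmptyElim ((inv f).onV (0 : Fin (n + 1)))

end MultiGraph

section SpanClass

variable {C : Type*} [Category C] {M M' A B : C}

open Classical in
noncomputable def spanClass (f : M ⟶ A) (g : M ⟶ B) : Option (A ⟶ B) :=
  if _ : IsIso f then some (inv f ≫ g) else none

theorem spanClass_of_isIso (f : M ⟶ A) [IsIso f] (g : M ⟶ B) :
    spanClass f g = some (inv f ≫ g) :=
  dif_pos ‹_›

theorem spanClass_of_not_isIso {f : M ⟶ A} (hf : ¬IsIso f) (g : M ⟶ B) : spanClass f g = none :=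
  dif_neg hf

theorem spanClass_iso_comp (φ : M ≅ M') (f : M' ⟶ A) (g : M' ⟶ B) :
    spanClass (φ.hom ≫ f) (φ.hom ≫ g) = spanClass f g := by
  by_cases hf : IsIso f
  · simp [spanClass_of_isIso]
  · rw [spanClass_of_not_isIso hf, spanClass_of_not_isIso (by rwa [isIso_comp_left_iff])]

end SpanClass

namespace AdmissibleOverlap

open MultiGraph

variable {n : ℕ}

theorem isEmpty_of_not_isIso (O : AdmissibleOverlap n) (hO : ¬IsIso O.f) : IsEmpty O.M.V := by
  have := O.mono_f
  have := O.mono_g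
  obtain ⟨P, iP, iC, hpo, hP⟩ := O.admissible
  exact ((isEmpty_or_isIso_of_isPushout hpo hP).resolve_right hO).1

theorem overlapIso_of_isEmpty (O O' : AdmissibleOverlap n) [IsEmpty O.M.V] [IsEmpty O'.M.V] :
    overlapIso n O O' :=
  ⟨(isInitialOfIsEmpty O.M).uniqueUpToIso (isInitialOfIsEmpty O'.M),
    (isInitialOfIsEmpty O.M).hom_ext _ _, (isInitialOfIsEmpty O.M).hom_ext _ _⟩

theorem overlapIso_of_inv_comp_eq (O O' : AdmissibleOverlap n) [IsIso O.f] [IsIso O'.f]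
    (h : inv O.f ≫ O.g = inv O'.f ≫ O'.g) : overlapIso n O O' :=
  ⟨asIso O.f ≪≫ (asIso O'.f).symm, by simp, by simp [← h]⟩

def empty (hn : 1 ≤ n) : AdmissibleOverlap n where
  M := MultiGraph.empty
  f := (isInitialOfIsEmpty _).to _
  g := (isInitialOfIsEmpty _).to _
  mono_f := (MultiGraph.mono_iff_injective _).2 ⟨fun v => isEmptyElim v, fun e => e.elim⟩
  mono_g := (MultiGraph.mono_iff_injective _).2 ⟨fun v => isEmptyElim v, fun e => e.elim⟩
  admissible := exists_isPushout_isRigid hn _ _ (Or.inl inferInstance)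

def full (hn : 1 ≤ n) (h : pathGraph n ⟶ cycleGraph (n + 1)) : AdmissibleOverlap n where
  M := pathGraph n
  f := 𝟙 _
  g := h
  mono_f := inferInstance
  mono_g := mono_of_pathGraph_to_cycleGraph h
  admissible := exists_isPushout_isRigid hn _ _ (Or.inr inferInstance)

end AdmissibleOverlap

noncomputable def overlapClass (n : ℕ) :
    Quot (overlapIso n) → Option (pathGraph n ⟶ cycleGraph (n + 1)) :=
  Quot.lift (fun O => spanClass O.f O.g) fun _ _ ⟨φ, hf, hg⟩ => by
    rw [← hf, ← hg, spanClass_iso_comp]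

theorem overlapClass_injective (n : ℕ) : Injective (overlapClass n) := by
  rintro ⟨O⟩ ⟨O'⟩ (h : spanClass O.f O.g = spanClass O'.f O'.g)
  apply Quot.sound
  by_cases hO : IsIso O.f <;> by_cases hO' : IsIso O'.f
  · simp only [spanClass_of_isIso, Option.some.injEq] at h
    exact O.overlapIso_of_inv_comp_eq O' h
  · simp [spanClass_of_isIso, spanClass_of_not_isIso hO'] at h
  · simp [spanClass_of_isIso, spanClass_of_not_isIso hO] at h
  · have := O.isEmpty_of_not_isIso hO
    have := O'.isEmpty_of_not_isIso hO'
    exact O.overlapIso_of_isEmpty O'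

theorem overlapClass_surjective {n : ℕ} (hn : 1 ≤ n) : Surjective (overlapClass n) := by
  rintro (_ | h)
  · exact ⟨Quot.mk _ (.empty hn), spanClass_of_not_isIso
      (MultiGraph.not_isIso_of_isEmpty (inferInstanceAs (IsEmpty MultiGraph.empty.V)) _) _⟩
  · refine ⟨Quot.mk _ (.full hn h), ?_⟩
    show spanClass (𝟙 _) h = some h
    simp [spanClass_of_isIso]

/-- A monic span `(π_n ↩ M ↪ λ_{n+1})` has a rigid, self-loop-free pushout iff
the overlap `M` is empty or the path fully embeds (`M ↪ π_n` is an
isomorphism); consequently there are exactly `n + 2` admissible overlaps up to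
isomorphism of spans. -/
theorem stmt_13 (n : ℕ) (hn : 1 ≤ n) :
    (∀ (M : MultiGraph) (f : M ⟶ pathGraph n) (g : M ⟶ cycleGraph (n + 1)),
      Mono f → Mono g →
      ((∃ (P : MultiGraph) (iP : pathGraph n ⟶ P) (iC : cycleGraph (n + 1) ⟶ P),
          IsPushout f g iP iC ∧ IsRigid P) ↔
        ((IsEmpty M.V ∧ IsEmpty M.E) ∨ IsIso f))) ∧
    Nat.card (Quot (overlapIso n)) = n + 2 := by
  refine ⟨fun M f g _ _ => ⟨fun ⟨P, iP, iC, hpo, hP⟩ => ?_, fun h =>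
    MultiGraph.exists_isPushout_isRigid hn f g (h.imp_left And.left)⟩, ?_⟩
  · exact MultiGraph.isEmpty_or_isIso_of_isPushout hpo hP
  · rw [Nat.card_congr (Equiv.ofBijective _ ⟨overlapClass_injective n, overlapClass_surjective hn⟩),
      Nat.card_congr (MultiGraph.pathToCycleEquiv n).optionCongr, Finite.card_option, Nat.card_fin]
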